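/- Product inequality: let f_1,...,f_r : X → Y and g_1,...,g_r : X̃ → Ỹ be fibrewise maps over B, and suppose the fibred product X ×_B X̃ is a normal space. Then D_B(f_1 ×_B g_1,...,f_r ×_B g_r) ≤ D_B(f_1,...,f_r) + D_B(g_1,...,g_r). -/

import Mathlib

/-!
Pull the optimal covers `U₀, …, U_k` of `X` and `V₀, …, V_l` of `X̃` back to the normal space
`X ×_B X̃` and choose subordinate partitions of unity `φ`, `ψ`. For nonempty `S`, `T`, the set of
points where each `φ i * ψ j` with `(i, j) ∈ S × T` is positive and beats every `φ p * ψ q` with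
`(p, q) ∉ S × T` is open and lies over `U i × V j`, and two such sets with the same `|S| + |T|`
are disjoint. Grouping them by `|S| + |T| ∈ {2, …, k + l + 2}` gives `k + l + 1` open sets covering
`X ×_B X̃`, each a disjoint union of pieces on which the products of the given fibrewise homotopies
are defined, and fibrewise homotopies glue over disjoint open pieces.
-/

open Set

/-- Two continuous maps are fibrewise homotopic over `B`: there is a homotopy
whose every time-slice commutes with the projections to `B`. -/
def FibHomotopic {B X Y : Type*} [TopologicalSpace B] [TopologicalSpace X] [TopologicalSpace Y]
    (pX : X → B) (pY : Y → B) (f g : C(X, Y)) : Prop :=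
  ∃ H : f.Homotopy g, ∀ (x : X) (t : unitInterval), pY (H (t, x)) = pX x

/-- Sequential parametrized homotopic distance of a family of fibrewise maps:
the least `n` such that `X` admits an open cover by `n + 1` open sets on each of
which all the maps are pairwise fibrewise homotopic (`∞` if none exists). -/
noncomputable def fibDist {B X Y ι : Type*} [TopologicalSpace B] [TopologicalSpace X]
    [TopologicalSpace Y] (pX : X → B) (pY : Y → B) (f : ι → C(X, Y)) : ℕ∞ :=
  sInf {n : ℕ∞ | ∃ k : ℕ, (k : ℕ∞) = n ∧ ∃ U : Fin (k + 1) → Set X,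
    (∀ i, IsOpen (U i)) ∧ (⋃ i, U i) = Set.univ ∧
    ∀ i s t, FibHomotopic (fun x : U i => pX (x : X)) pY
      ((f s).restrict (U i)) ((f t).restrict (U i))}

/-- The fibred product of two fibrewise spaces over `B`. -/
abbrev FibProd {B X X' : Type*} [TopologicalSpace B] [TopologicalSpace X] [TopologicalSpace X']
    (pX : X → B) (pX' : X' → B) : Type _ := {z : X × X' // pX z.1 = pX' z.2}

/-- The fibrewise product `f ×_B g` of two fibrewise maps. -/
def fibProdMap {B X X' Y Y' : Type*} [TopologicalSpace B] [TopologicalSpace X]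
    [TopologicalSpace X'] [TopologicalSpace Y] [TopologicalSpace Y']
    {pX : X → B} {pX' : X' → B} {pY : Y → B} {pY' : Y' → B}
    (f : C(X, Y)) (g : C(X', Y')) (hf : ∀ x, pY (f x) = pX x) (hg : ∀ x, pY' (g x) = pX' x) :
    C(FibProd pX pX', FibProd pY pY') :=
  ⟨fun z => ⟨(f z.1.1, g z.1.2), by rw [hf, hg, z.2]⟩, by
    apply Continuous.subtype_mk
    exact ((f.continuous.comp continuous_fst).prodMk
      (g.continuous.comp continuous_snd)).comp continuous_subtype_val⟩

section Dominance

variable {Z ι κ : Type*}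

def dominanceRegion (ρ : ι → Z → ℝ) (R : Finset ι) : Set Z :=
  {z | ∀ a ∈ R, 0 < ρ a z ∧ ∀ b ∉ R, ρ b z < ρ a z}

theorem isOpen_dominanceRegion [TopologicalSpace Z] [Finite ι] {ρ : ι → Z → ℝ}
    (hρ : ∀ a, Continuous (ρ a)) (R : Finset ι) : IsOpen (dominanceRegion ρ R) := by
  have : dominanceRegion ρ R =
      ⋂ a ∈ R, ({z | 0 < ρ a z} ∩ ⋂ b ∈ {b | b ∉ R}, {z | ρ b z < ρ a z}) := by
    ext z
    simp [dominanceRegion]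
  rw [this]
  exact isOpen_biInter_finset fun a _ => (isOpen_lt continuous_const (hρ a)).inter <|
    (Set.toFinite _).isOpen_biInter fun b _ => isOpen_lt (hρ b) (hρ a)

theorem disjoint_dominanceRegion {ρ : ι → Z → ℝ} {R R' : Finset ι} (h : ¬R ⊆ R')
    (h' : ¬R' ⊆ R) : Disjoint (dominanceRegion ρ R) (dominanceRegion ρ R') := by
  obtain ⟨a, haR, haR'⟩ := Finset.not_subset.1 h
  obtain ⟨b, hbR', hbR⟩ := Finset.not_subset.1 h'
  refine Set.disjoint_left.2 fun z hz hz' => ?_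
  exact ((hz a haR).2 b hbR).asymm ((hz' b hbR').2 a haR')

theorem exists_mem_dominanceRegion_mul [Fintype ι] [Fintype κ] {φ : ι → Z → ℝ}
    {ψ : κ → Z → ℝ} (hφ : ∀ i z, 0 ≤ φ i z) (hψ : ∀ j z, 0 ≤ ψ j z) {z : Z}
    (hφz : ∃ i, 0 < φ i z) (hψz : ∃ j, 0 < ψ j z) :
    ∃ S : Finset ι, ∃ T : Finset κ, S.Nonempty ∧ T.Nonempty ∧
      z ∈ dominanceRegion (fun p z => φ p.1 z * ψ p.2 z) (S ×ˢ T) := by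
  obtain ⟨i₀, hi₀⟩ := hφz
  obtain ⟨j₀, hj₀⟩ := hψz
  obtain ⟨iM, -, hiM⟩ := Finset.univ.exists_max_image (φ · z) ⟨i₀, Finset.mem_univ _⟩
  obtain ⟨jM, -, hjM⟩ := Finset.univ.exists_max_image (ψ · z) ⟨j₀, Finset.mem_univ _⟩
  -- the pairs of maximisers of `φ · z` and `ψ · z` are exactly the maximisers of the product
  refine ⟨Finset.univ.filter (fun i => ∀ i', φ i' z ≤ φ i z),
    Finset.univ.filter (fun j => ∀ j', ψ j' z ≤ ψ j z),
    ⟨iM, by simpa using fun i' => hiM i' (Finset.mem_univ _)⟩,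
    ⟨jM, by simpa using fun j' => hjM j' (Finset.mem_univ _)⟩, ?_⟩
  rintro ⟨i, j⟩ hij
  simp only [Finset.mem_product, Finset.mem_filter, Finset.mem_univ, true_and] at hij
  obtain ⟨hi, hj⟩ := hij
  have hφi : 0 < φ i z := hi₀.trans_le (hi i₀)
  have hψj : 0 < ψ j z := hj₀.trans_le (hj j₀)
  refine ⟨mul_pos hφi hψj, ?_⟩
  rintro ⟨p, q⟩ hpq
  simp only [Finset.mem_product, Finset.mem_filter, Finset.mem_univ, true_and, not_and_or,
    not_forall, not_le] at hpq
  rcases hpq with ⟨i', hp⟩ | ⟨j', hq⟩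
  · calc φ p z * ψ q z ≤ φ p z * ψ j z := mul_le_mul_of_nonneg_left (hj q) (hφ p z)
      _ < φ i z * ψ j z := mul_lt_mul_of_pos_right (hp.trans_le (hi i')) hψj
  · calc φ p z * ψ q z ≤ φ i z * ψ q z := mul_le_mul_of_nonneg_right (hi p) (hψ q z)
      _ < φ i z * ψ j z := mul_lt_mul_of_pos_left (hq.trans_le (hj j')) hφi

end Dominance

theorem Finset.not_product_subset_product_of_card_add_eq {ι κ : Type*} {S S' : Finset ι}
    {T T' : Finset κ} (hS : S.Nonempty) (hT : T.Nonempty)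
    (hcard : S.card + T.card = S'.card + T'.card) (hne : (S, T) ≠ (S', T')) :
    ¬S ×ˢ T ⊆ S' ×ˢ T' := by
  intro h
  obtain ⟨i, hi⟩ := hS
  obtain ⟨j, hj⟩ := hT
  have hSS' : S ⊆ S' := fun a ha => (Finset.mem_product.1 (h (Finset.mk_mem_product ha hj))).1
  have hTT' : T ⊆ T' := fun b hb => (Finset.mem_product.1 (h (Finset.mk_mem_product hi hb))).2
  have := Finset.card_le_card hSS'
  have := Finset.card_le_card hTT'
  rw [Finset.eq_of_subset_of_card_le hSS' (by omega),
    Finset.eq_of_subset_of_card_le hTT' (by omega)] at hne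
  exact hne rfl

theorem exists_pairwiseDisjoint_refinement {Z : Type*} [TopologicalSpace Z] [NormalSpace Z]
    {k l : ℕ} {A : Fin (k + 1) → Set Z} {B : Fin (l + 1) → Set Z} (hA : ∀ i, IsOpen (A i))
    (hB : ∀ j, IsOpen (B j)) (hAc : ⋃ i, A i = univ) (hBc : ⋃ j, B j = univ) :
    ∃ W : Fin (k + l + 1) → Set (Set Z), (∀ c, ∀ w ∈ W c, IsOpen w) ∧
      (∀ c, (W c).PairwiseDisjoint id) ∧ (⋃ c, ⋃₀ W c) = univ ∧
      ∀ c, ∀ w ∈ W c, ∃ i j, w ⊆ A i ∩ B j := by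
  obtain ⟨φ, hφ⟩ := PartitionOfUnity.exists_isSubordinate_of_locallyFinite isClosed_univ A hA
    (locallyFinite_of_finite A) hAc.ge
  obtain ⟨ψ, hψ⟩ := PartitionOfUnity.exists_isSubordinate_of_locallyFinite isClosed_univ B hB
    (locallyFinite_of_finite B) hBc.ge
  let ρ : Fin (k + 1) × Fin (l + 1) → Z → ℝ := fun p z => φ p.1 z * ψ p.2 z
  let level (c : ℕ) : Set (Finset (Fin (k + 1)) × Finset (Fin (l + 1))) :=
    {ST | ST.1.Nonempty ∧ ST.2.Nonempty ∧ ST.1.card + ST.2.card = c + 2}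
  refine ⟨fun c => (fun ST => dominanceRegion ρ (ST.1 ×ˢ ST.2)) '' level c, ?_, ?_, ?_, ?_⟩
  · rintro c _ ⟨ST, -, rfl⟩
    exact isOpen_dominanceRegion
      (fun p : Fin (k + 1) × Fin (l + 1) => (φ p.1).continuous.mul (ψ p.2).continuous) _
  · rintro c _ ⟨⟨S, T⟩, ⟨hS, hT, hc⟩, rfl⟩ _ ⟨⟨S', T'⟩, ⟨hS', hT', hc'⟩, rfl⟩ hne
    have hST : (S, T) ≠ (S', T') := fun h => hne (by rw [h])
    exact disjoint_dominanceRegion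
      (Finset.not_product_subset_product_of_card_add_eq hS hT (by omega) hST)
      (Finset.not_product_subset_product_of_card_add_eq hS' hT' (by omega) hST.symm)
  · refine eq_univ_of_forall fun z => ?_
    obtain ⟨S, T, hS, hT, hz⟩ := exists_mem_dominanceRegion_mul φ.nonneg ψ.nonneg
      (φ.exists_pos (mem_univ z)) (ψ.exists_pos (mem_univ z))
    have hSk : S.card ≤ k + 1 := by simpa using S.card_le_univ
    have hTl : T.card ≤ l + 1 := by simpa using T.card_le_univ
    have := hS.card_pos
    have := hT.card_pos
    refine mem_iUnion.2 ⟨⟨S.card + T.card - 2, by omega⟩, _, ⟨(S, T), ⟨hS, hT, ?_⟩, rfl⟩, hz⟩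
    show S.card + T.card = S.card + T.card - 2 + 2
    omega
  · rintro c _ ⟨⟨S, T⟩, ⟨⟨i, hi⟩, ⟨j, hj⟩, -⟩, rfl⟩
    refine ⟨i, j, fun z hz => ?_⟩
    have hpos : 0 < φ i z * ψ j z := (hz _ (Finset.mk_mem_product hi hj)).1
    exact ⟨hφ i (subset_tsupport _ (left_ne_zero_of_mul hpos.ne')),
      hψ j (subset_tsupport _ (right_ne_zero_of_mul hpos.ne'))⟩

section FibHomotopic

variable {B Z X X' Y Y' : Type*} [TopologicalSpace B] [TopologicalSpace Z] [TopologicalSpace X]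
  [TopologicalSpace X'] [TopologicalSpace Y] [TopologicalSpace Y']
  {pZ : Z → B} {pX : X → B} {pX' : X' → B} {pY : Y → B} {pY' : Y' → B}

theorem FibHomotopic.comp {f₀ f₁ : C(X, Y)} (h : FibHomotopic pX pY f₀ f₁) (e : C(Z, X))
    (he : ∀ z, pX (e z) = pZ z) : FibHomotopic pZ pY (f₀.comp e) (f₁.comp e) :=
  let ⟨H, hH⟩ := h
  ⟨H.compContinuousMap e, fun z t => (hH (e z) t).trans (he z)⟩

theorem FibHomotopic.prodMap {f₀ f₁ : C(X, Y)} {g₀ g₁ : C(X', Y')}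
    {hf₀ : ∀ x, pY (f₀ x) = pX x} {hf₁ : ∀ x, pY (f₁ x) = pX x}
    {hg₀ : ∀ x, pY' (g₀ x) = pX' x} {hg₁ : ∀ x, pY' (g₁ x) = pX' x}
    (hf : FibHomotopic pX pY f₀ f₁) (hg : FibHomotopic pX' pY' g₀ g₁) :
    FibHomotopic (fun z : FibProd pX pX' => pX z.1.1) (fun w : FibProd pY pY' => pY w.1.1)
      (fibProdMap f₀ g₀ hf₀ hg₀) (fibProdMap f₁ g₁ hf₁ hg₁) := by
  obtain ⟨H, hH⟩ := hf
  obtain ⟨K, hK⟩ := hg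
  refine ⟨⟨⟨fun u => ⟨(H (u.1, u.2.1.1), K (u.1, u.2.1.2)), by rw [hH, hK, u.2.2]⟩, ?_⟩,
    fun z => ?_, fun z => ?_⟩, fun z t => hH _ t⟩
  · fun_prop
  · exact Subtype.ext (Prod.ext (H.apply_zero _) (K.apply_zero _))
  · exact Subtype.ext (Prod.ext (H.apply_one _) (K.apply_one _))

theorem FibHomotopic.prodMap_restrict {f₀ f₁ : C(X, Y)} {g₀ g₁ : C(X', Y')}
    {hf₀ : ∀ x, pY (f₀ x) = pX x} {hf₁ : ∀ x, pY (f₁ x) = pX x}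
    {hg₀ : ∀ x, pY' (g₀ x) = pX' x} {hg₁ : ∀ x, pY' (g₁ x) = pX' x}
    {U : Set X} {V : Set X'} {W : Set (FibProd pX pX')} (hW : ∀ z ∈ W, z.1.1 ∈ U ∧ z.1.2 ∈ V)
    (hf : FibHomotopic (fun x : U => pX x) pY (f₀.restrict U) (f₁.restrict U))
    (hg : FibHomotopic (fun x : V => pX' x) pY' (g₀.restrict V) (g₁.restrict V)) :
    FibHomotopic (fun z : W => pX z.1.1.1) (fun w : FibProd pY pY' => pY w.1.1)
      ((fibProdMap f₀ g₀ hf₀ hg₀).restrict W) ((fibProdMap f₁ g₁ hf₁ hg₁).restrict W) :=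
  (hf.prodMap (hf₀ := fun x : U => hf₀ x) (hf₁ := fun x : U => hf₁ x)
    (hg₀ := fun x : V => hg₀ x) (hg₁ := fun x : V => hg₁ x) hg).comp
    ⟨fun z : W => ⟨(⟨z.1.1.1, (hW z z.2).1⟩, ⟨z.1.1.2, (hW z z.2).2⟩), z.1.2⟩, by fun_prop⟩
    fun _ => rfl

theorem FibHomotopic.sUnion {F G : C(Z, Y)} {𝒲 : Set (Set Z)} (hopen : ∀ w ∈ 𝒲, IsOpen w)
    (hdisj : 𝒲.PairwiseDisjoint id)
    (h : ∀ w ∈ 𝒲, FibHomotopic (fun x : w => pZ x) pY (F.restrict w) (G.restrict w)) :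
    FibHomotopic (fun x : ⋃₀ 𝒲 => pZ x) pY (F.restrict (⋃₀ 𝒲)) (G.restrict (⋃₀ 𝒲)) := by
  choose H hH using h
  let S (w : 𝒲) : Set (unitInterval × ⋃₀ 𝒲) := {u | (u.2 : Z) ∈ (w : Set Z)}
  let φ (w : 𝒲) : C(S w, Y) :=
    (H w w.2).toContinuousMap.comp ⟨fun u : S w => (u.1.1, ⟨u.1.2, u.2⟩), by fun_prop⟩
  have agree (w w' : 𝒲) (u) (hu : u ∈ S w) (hu' : u ∈ S w') : φ w ⟨u, hu⟩ = φ w' ⟨u, hu'⟩ := by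
    obtain rfl : w = w' :=
      Subtype.ext (hdisj.elim w.2 w'.2 (not_disjoint_iff.2 ⟨u.2, hu, hu'⟩))
    rfl
  have cover (u : unitInterval × ⋃₀ 𝒲) : ∃ w, S w ∈ nhds u :=
    let ⟨w, hw, hu⟩ := u.2.2
    ⟨⟨w, hw⟩, ((hopen w hw).preimage (by fun_prop)).mem_nhds hu⟩
  let L := ContinuousMap.liftCover S φ agree cover
  have hL (t : unitInterval) (x : ⋃₀ 𝒲) (w : Set Z) (hw : w ∈ 𝒲) (hx : (x : Z) ∈ w) :
      L (t, x) = H w hw (t, ⟨x, hx⟩) :=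
    ContinuousMap.liftCover_coe (i := (⟨w, hw⟩ : 𝒲)) (⟨(t, x), hx⟩ : S ⟨w, hw⟩)
  refine ⟨⟨L, fun x => ?_, fun x => ?_⟩, fun x t => ?_⟩ <;> obtain ⟨w, hw, hx⟩ := x.2
  · exact (hL 0 x w hw hx).trans ((H w hw).apply_zero _)
  · exact (hL 1 x w hw hx).trans ((H w hw).apply_one _)
  · exact (congrArg pY (hL t x w hw hx)).trans (hH w hw _ t)

end FibHomotopic

section fibDist

variable {B X Y ι : Type*} [TopologicalSpace B] [TopologicalSpace X] [TopologicalSpace Y]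
  {pX : X → B} {pY : Y → B} {f : ι → C(X, Y)}

theorem fibDist_le_of_cover {k : ℕ} (U : Fin (k + 1) → Set X) (hU : ∀ i, IsOpen (U i))
    (hcov : ⋃ i, U i = univ)
    (hf : ∀ i s t, FibHomotopic (fun x : U i => pX x) pY ((f s).restrict (U i))
      ((f t).restrict (U i))) :
    fibDist pX pY f ≤ k :=
  sInf_le ⟨k, rfl, U, hU, hcov, hf⟩

theorem exists_cover_of_fibDist_ne_top (h : fibDist pX pY f ≠ ⊤) :
    ∃ k : ℕ, (k : ℕ∞) = fibDist pX pY f ∧ ∃ U : Fin (k + 1) → Set X,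
      (∀ i, IsOpen (U i)) ∧ (⋃ i, U i) = univ ∧
      ∀ i s t, FibHomotopic (fun x : U i => pX x) pY ((f s).restrict (U i))
        ((f t).restrict (U i)) :=
  (csInf_mem (nonempty_iff_ne_empty.2 fun hempty => h (by rw [fibDist, hempty, sInf_empty])) :
    fibDist pX pY f ∈ _)

end fibDist

theorem stmt13 {B X X' Y Y' : Type*} [TopologicalSpace B] [TopologicalSpace X]
    [TopologicalSpace X'] [TopologicalSpace Y] [TopologicalSpace Y']
    (pX : X → B) (pX' : X' → B) (pY : Y → B) (pY' : Y' → B)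
    [NormalSpace (FibProd pX pX')]
    (r : ℕ) (f : Fin r → C(X, Y)) (hf : ∀ i x, pY (f i x) = pX x)
    (g : Fin r → C(X', Y')) (hg : ∀ i x, pY' (g i x) = pX' x) :
    fibDist (fun z : FibProd pX pX' => pX z.1.1) (fun w : FibProd pY pY' => pY w.1.1)
      (fun i => fibProdMap (f i) (g i) (hf i) (hg i)) ≤
      fibDist pX pY f + fibDist pX' pY' g := by
  rcases eq_or_ne (fibDist pX pY f) ⊤ with hf_top | hf_fin
  · simp [hf_top]
  rcases eq_or_ne (fibDist pX' pY' g) ⊤ with hg_top | hg_fin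
  · simp [hg_top]
  obtain ⟨k, hk, U, hUo, hUc, hU⟩ := exists_cover_of_fibDist_ne_top hf_fin
  obtain ⟨l, hl, V, hVo, hVc, hV⟩ := exists_cover_of_fibDist_ne_top hg_fin
  obtain ⟨W, hWo, hWd, hWc, hWsub⟩ := exists_pairwiseDisjoint_refinement
    (A := fun i => (fun z : FibProd pX pX' => z.1.1) ⁻¹' U i)
    (B := fun j => (fun z : FibProd pX pX' => z.1.2) ⁻¹' V j)
    (fun i => (hUo i).preimage (by fun_prop)) (fun j => (hVo j).preimage (by fun_prop))
    (by rw [← preimage_iUnion, hUc, preimage_univ])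
    (by rw [← preimage_iUnion, hVc, preimage_univ])
  rw [← hk, ← hl, ← Nat.cast_add]
  refine fibDist_le_of_cover (fun c => ⋃₀ W c) (fun c => isOpen_sUnion (hWo c)) hWc
    fun c s t => FibHomotopic.sUnion (pZ := fun z : FibProd pX pX' => pX z.1.1) (hWo c)
      (hWd c) fun w hw => ?_
  obtain ⟨i, j, hij⟩ := hWsub c w hw
  exact FibHomotopic.prodMap_restrict (fun z hz => hij hz) (hU i s t) (hV j s t)
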